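/- arXiv:1312.2829 — 2 statements merged into one kernel-verified Lean document; each statement's English description precedes it below -/
import Mathlib

section
/- Let (T, W) be a well-founded tree-decomposition of a graph G, let ≤' be a total well-ordering of V(T) extending the tree order, and for a vertex x define m(x) to be the ≤'-least node t with x ∈ W(t). If t0 is a node and b ∈ W(t0), then m(b) ≤ t0 in the tree order. -/
universe u

def TreeInf (T : Type u) [PartialOrder T] (inf : T → T → T) : Prop :=
  ∀ t1 t2 : T, inf t1 t2 ≤ t1 ∧ inf t1 t2 ≤ t2 ∧ ∀ s : T, s ≤ t1 → s ≤ t2 → s ≤ inf t1 t2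

def WFTree (T : Type u) [PartialOrder T] (inf : T → T → T) : Prop :=
  Nonempty T ∧ TreeInf T inf ∧
    ∀ t : T, IsWellOrder {t' : T // t' < t} (fun a b => a.1 < b.1)

/-- `T[t1,t2] = {t : t ≥ inf{t1,t2} and (t ≤ t1 or t ≤ t2)}`. -/
def treeInterval {T : Type u} [PartialOrder T] (inf : T → T → T) (t1 t2 : T) : Set T :=
  {t | inf t1 t2 ≤ t ∧ (t ≤ t1 ∨ t ≤ t2)}

/-- A well-founded tree-decomposition of the graph `G`, with bags `W`. -/
def WFTreeDecomp {V T : Type u} [PartialOrder T] (inf : T → T → T)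
    (G : SimpleGraph V) (W : T → Set V) : Prop :=
  WFTree T inf ∧
  -- (W1): every vertex lies in some bag, every edge lies in some single bag
  (∀ v : V, ∃ t : T, v ∈ W t) ∧
  (∀ u v : V, G.Adj u v → ∃ t : T, u ∈ W t ∧ v ∈ W t) ∧
  -- (W2)
  (∀ t1 t2 t' : T, t' ∈ treeInterval inf t1 t2 → W t1 ∩ W t2 ⊆ W t') ∧
  -- (W3)
  (∀ C : Set T, C.Nonempty → IsChain (· ≤ ·) C → ∀ c : T, IsLUB C c →
    (⋂ t ∈ C, W t) ⊆ W c)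

/-! By (W2), `b` lies in the bag of `inf mb t0`, a tree-predecessor of `mb`; since `r` extends
the tree order, a strict predecessor would contradict the `r`-minimality of `mb`, so
`inf mb t0 = mb ≤ t0`. -/

namespace WFTreeDecomp

variable {V T : Type u} [PartialOrder T] {inf : T → T → T} {G : SimpleGraph V} {W : T → Set V}

theorem inf_le_left (hdec : WFTreeDecomp inf G W) (t1 t2 : T) : inf t1 t2 ≤ t1 :=
  (hdec.1.2.1 t1 t2).1

theorem inf_le_right (hdec : WFTreeDecomp inf G W) (t1 t2 : T) : inf t1 t2 ≤ t2 :=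
  (hdec.1.2.1 t1 t2).2.1

theorem mem_inf (hdec : WFTreeDecomp inf G W) {b : V} {t1 t2 : T} (h1 : b ∈ W t1)
    (h2 : b ∈ W t2) : b ∈ W (inf t1 t2) :=
  hdec.2.2.2.1 t1 t2 _ ⟨le_rfl, Or.inl (hdec.inf_le_left t1 t2)⟩ ⟨h1, h2⟩

end WFTreeDecomp

theorem min_bag_le_of_mem_general {V T : Type u} [PartialOrder T]
    (inf : T → T → T) (G : SimpleGraph V) (W : T → Set V)
    (hdec : WFTreeDecomp inf G W)
    (r : T → T → Prop) (hext : ∀ a b : T, a < b → r a b)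
    (b : V) (mb : T) (hmem : b ∈ W mb) (hmin : ∀ t : T, b ∈ W t → ¬ r t mb)
    (t0 : T) (hb0 : b ∈ W t0) :
    mb ≤ t0 := by
  have hinf_eq : inf mb t0 = mb :=
    (hdec.inf_le_left mb t0).lt_or_eq.resolve_left fun hlt =>
      hmin _ (hdec.mem_inf hmem hb0) (hext _ _ hlt)
  exact hinf_eq ▸ hdec.inf_le_right mb t0

/-- If `(T, W)` is a well-founded tree-decomposition of `G`, `r` is a total well-ordering
of `T` extending the tree order, `mb` is the `r`-least node whose bag contains `b`, and
`b ∈ W t0`, then `mb ≤ t0` in the tree order. -/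
theorem min_bag_le_of_mem {V T : Type u} [PartialOrder T]
    (inf : T → T → T) (G : SimpleGraph V) (W : T → Set V)
    (hdec : WFTreeDecomp inf G W)
    (r : T → T → Prop) (hr : IsWellOrder T r) (hext : ∀ a b : T, a < b → r a b)
    (b : V) (mb : T) (hmem : b ∈ W mb) (hmin : ∀ t : T, b ∈ W t → ¬ r t mb)
    (t0 : T) (hb0 : b ∈ W t0) :
    mb ≤ t0 :=
  min_bag_le_of_mem_general inf G W hdec r hext b mb hmem hmin t0 hb0
end

section
/- If a graph G admits a well-founded tree-decomposition (T, W) such that |W(t)| < κ for every node t, where κ is an infinite cardinal, then G has a proper coloring with fewer than or equal to κ colors, i.e., the chromatic number of G is at most κ. -/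
universe u

/-!
Every vertex `v` has a least bag `home v`: the tree order is well-founded, and by (W2) the
bags containing `v` are closed under meets. If `uv` is an edge with `home u ≤ home v`, then
(W2), applied to the path from `home u` to a bag containing both ends, puts `u` into
`W (home v)`. So, ordering the vertices by `home` (ties broken by a well-order of `V`), every
vertex has fewer than `κ` earlier neighbours, and the greedy colouring along this well-founded
order needs at most `κ` colours.
-/

open Cardinal

universe w

section TreeOrder

variable {T : Type u} [PartialOrder T]

theorem wellFounded_lt_of_isWellOrder_below
    (hwo : ∀ t : T, IsWellOrder {t' : T // t' < t} (fun a b => a.1 < b.1)) :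
    WellFounded ((· < ·) : T → T → Prop) :=
  ⟨fun t => ⟨t, fun s hs => Acc.of_downward_closed Subtype.val
    (fun {a b} hb => ⟨⟨b, hb.trans a.2⟩, rfl⟩) (⟨s, hs⟩ : {t' // t' < t}) ((hwo t).wf.apply _)⟩⟩

theorem le_or_le_of_le_of_le
    (hwo : ∀ t : T, IsWellOrder {t' : T // t' < t} (fun a b => a.1 < b.1))
    {a b t : T} (ha : a ≤ t) (hb : b ≤ t) : a ≤ b ∨ b ≤ a := by
  rcases ha.eq_or_lt with rfl | ha
  · exact Or.inr hb
  rcases hb.eq_or_lt with rfl | hb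
  · exact Or.inl ha.le
  rcases @trichotomous_of _ (fun p q : {t' // t' < t} => p.1 < q.1) (hwo t).toTrichotomous
      ⟨a, ha⟩ ⟨b, hb⟩ with h | h | h
  · exact Or.inl h.le
  · exact Or.inl (congrArg Subtype.val h).le
  · exact Or.inr h.le

end TreeOrder

theorem SimpleGraph.nonempty_coloring_of_wellFounded {V : Type u} {α : Type w}
    (G : SimpleGraph V) {r : V → V → Prop} (hr : WellFounded r)
    (hadj : ∀ ⦃u v⦄, G.Adj u v → r u v ∨ r v u)
    (hsmall : ∀ v, lift.{w} #{u // G.Adj u v ∧ r u v} < lift.{u} #α) :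
    Nonempty (G.Coloring α) := by
  have hfree : ∀ v (prev : ∀ u, r u v → α), ∃ a, ∀ u (h : r u v), G.Adj u v → prev u h ≠ a := by
    intro v prev
    obtain ⟨a, ha⟩ := compl_nonempty_of_mk_lt_mk
      (S := Set.range fun u : {u // G.Adj u v ∧ r u v} => prev u u.2.2)
      (lift_lt.mp (mk_range_le_lift.trans_lt (hsmall v)))
    exact ⟨a, fun u h huv hu => ha ⟨⟨u, huv, h⟩, hu⟩⟩
  choose pick hpick using hfree
  let c := hr.fix pick
  have hc : ∀ v, c v = pick v fun u _ => c u := hr.fix_eq pick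
  refine ⟨Coloring.mk c fun {u v} huv => ?_⟩
  rcases hadj huv with h | h
  · exact (hc v).symm ▸ hpick v (fun u _ => c u) u h huv
  · exact ((hc u).symm ▸ hpick u (fun v _ => c v) v h huv.symm).symm

namespace WFTreeDecomp

variable {V T : Type u} [PartialOrder T] {inf : T → T → T} {G : SimpleGraph V} {W : T → Set V}

theorem wellFounded_lt (hdec : WFTreeDecomp inf G W) : WellFounded ((· < ·) : T → T → Prop) :=
  wellFounded_lt_of_isWellOrder_below hdec.1.2.2

theorem exists_isLeast_bag (hdec : WFTreeDecomp inf G W) (v : V) :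
    ∃ h, IsLeast {t | v ∈ W t} h := by
  obtain ⟨m, hm, hmin⟩ := hdec.wellFounded_lt.has_min _ (hdec.2.1 v)
  obtain ⟨⟨-, hinf, -⟩, -, -, hpath, -⟩ := hdec
  refine ⟨m, hm, fun t ht => ?_⟩
  have hmeet : v ∈ W (inf m t) := hpath m t _ ⟨le_rfl, Or.inl (hinf m t).1⟩ ⟨hm, ht⟩
  have : inf m t = m := (hinf m t).1.eq_of_not_lt (hmin _ hmeet)
  exact this ▸ (hinf m t).2.1

variable {home : V → T}

theorem le_or_le_of_adj (hdec : WFTreeDecomp inf G W)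
    (hhome : ∀ v, IsLeast {t | v ∈ W t} (home v)) {u v : V} (huv : G.Adj u v) :
    home u ≤ home v ∨ home v ≤ home u := by
  obtain ⟨⟨-, -, hwo⟩, -, hedge, -, -⟩ := hdec
  obtain ⟨t, hut, hvt⟩ := hedge u v huv
  exact le_or_le_of_le_of_le hwo ((hhome u).2 hut) ((hhome v).2 hvt)

theorem mem_bag_of_adj (hdec : WFTreeDecomp inf G W)
    (hhome : ∀ v, IsLeast {t | v ∈ W t} (home v)) {u v : V} (huv : G.Adj u v)
    (hle : home u ≤ home v) : u ∈ W (home v) := by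
  obtain ⟨⟨-, hinf, -⟩, -, hedge, hpath, -⟩ := hdec
  obtain ⟨t, hut, hvt⟩ := hedge u v huv
  have hmeet : inf (home u) t = home u :=
    le_antisymm (hinf _ _).1 ((hinf _ _).2.2 _ le_rfl ((hhome u).2 hut))
  exact hpath (home u) t (home v) ⟨hmeet.symm ▸ hle, Or.inr ((hhome v).2 hvt)⟩ ⟨(hhome u).1, hut⟩

end WFTreeDecomp

theorem coloring_of_small_bags_general {V T : Type u} [PartialOrder T]
    (inf : T → T → T) (G : SimpleGraph V) (W : T → Set V)
    (hdec : WFTreeDecomp inf G W)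
    (κ : Cardinal.{u})
    (hsmall : ∀ t : T, Cardinal.mk (W t) < κ) :
    ∃ c : V → κ.out, ∀ u v : V, G.Adj u v → c u ≠ c v := by
  choose home hhome using hdec.exists_isLeast_bag
  let r : V → V → Prop := InvImage (Prod.Lex (· < ·) WellOrderingRel) fun v => (home v, v)
  have hr : WellFounded r :=
    InvImage.wf _ (hdec.wellFounded_lt.prod_lex WellOrderingRel.isWellOrder.wf)
  have home_le : ∀ {u v}, r u v → home u ≤ home v := fun h => by
    rcases Prod.lex_def.mp h with h | ⟨h, -⟩
    exacts [h.le, h.le]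
  have htotal : ∀ ⦃u v⦄, G.Adj u v → r u v ∨ r v u := by
    intro u v huv
    have htri := trichotomous_of WellOrderingRel u v
    simp only [r, InvImage, Prod.lex_def]
    rcases hdec.le_or_le_of_adj hhome huv with h | h <;> have := h.lt_or_eq <;> grind [huv.ne]
  have hfew : ∀ v, #{u // G.Adj u v ∧ r u v} < #κ.out := fun v => by
    rw [mk_out]
    refine (mk_le_of_injective (f := fun u : {u // G.Adj u v ∧ r u v} =>
      (⟨u, hdec.mem_bag_of_adj hhome u.2.1 (home_le u.2.2)⟩ : W (home v))) ?_).trans_lt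
      (hsmall _)
    exact fun a b hab => Subtype.ext (by simpa using hab)
  obtain ⟨C⟩ := G.nonempty_coloring_of_wellFounded hr htotal fun v => lift_lt.mpr (hfew v)
  exact ⟨C, fun u v => C.valid⟩

/-- If `G` admits a well-founded tree-decomposition all of whose bags have cardinality
less than the infinite cardinal `κ`, then `G` has a proper coloring with at most `κ`
colors. -/
theorem coloring_of_small_bags {V T : Type u} [PartialOrder T]
    (inf : T → T → T) (G : SimpleGraph V) (W : T → Set V)
    (hdec : WFTreeDecomp inf G W)
    (κ : Cardinal.{u}) (hκ : Cardinal.aleph0 ≤ κ)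
    (hsmall : ∀ t : T, Cardinal.mk (W t) < κ) :
    ∃ c : V → κ.out, ∀ u v : V, G.Adj u v → c u ≠ c v :=
  coloring_of_small_bags_general inf G W hdec κ hsmall
end
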